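/- Let p, y, β be real numbers with p > 0, y > 0 and √(p² + y²) < β, and set a₀ = √(p² + y²). Then the function h(a) = ( a + √( 2a² − a²y²/(a² − p²) ) ) / ( β + √( β² − a² + a²y²/(a² − p²) ) ) is well defined and monotonically increasing on the interval [a₀, β) (in particular both expressions under the square roots are nonnegative there), its minimum on this interval is attained at a = a₀, and h(a₀) = √(p² + y²)/β < 1. -/
import Mathlib


/-- The upper bound `κ_u(|a|)` of the Chebyshev damping coefficient for the fat
ellipse through `(p, y)` (with `p = x₊ − d`, `y = y₊`, `β = |λ₁ − d|`):
`h(a) = (a + √(2a² − a²y²/(a²−p²))) / (β + √(β² − a² + a²y²/(a²−p²)))`. -/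
noncomputable def kappaU (p y β a : ℝ) : ℝ :=
  (a + Real.sqrt (2 * a ^ 2 - a ^ 2 * y ^ 2 / (a ^ 2 - p ^ 2))) /
    (β + Real.sqrt (β ^ 2 - a ^ 2 + a ^ 2 * y ^ 2 / (a ^ 2 - p ^ 2)))

/-- For `p, y > 0` and `a₀ = √(p² + y²) < β`, the function `h = κ_u` is well
defined (both radicands are nonnegative) and monotonically increasing on
`[a₀, β)`, attains its minimum there at `a = a₀`, and
`h(a₀) = √(p² + y²)/β < 1`. -/
theorem stmt14 (p y β : ℝ) (hp : 0 < p) (hy : 0 < y)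
    (hβ : Real.sqrt (p ^ 2 + y ^ 2) < β) :
    (∀ a ∈ Set.Ico (Real.sqrt (p ^ 2 + y ^ 2)) β,
      0 ≤ 2 * a ^ 2 - a ^ 2 * y ^ 2 / (a ^ 2 - p ^ 2) ∧
      0 ≤ β ^ 2 - a ^ 2 + a ^ 2 * y ^ 2 / (a ^ 2 - p ^ 2)) ∧
    MonotoneOn (kappaU p y β) (Set.Ico (Real.sqrt (p ^ 2 + y ^ 2)) β) ∧
    (∀ a ∈ Set.Ico (Real.sqrt (p ^ 2 + y ^ 2)) β,
      kappaU p y β (Real.sqrt (p ^ 2 + y ^ 2)) ≤ kappaU p y β a) ∧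
    kappaU p y β (Real.sqrt (p ^ 2 + y ^ 2)) = Real.sqrt (p ^ 2 + y ^ 2) / β ∧
    Real.sqrt (p ^ 2 + y ^ 2) / β < 1 := by
  set s := Real.sqrt (p ^ 2 + y ^ 2) with hs
  have hpy : (0:ℝ) < p ^ 2 + y ^ 2 := by positivity
  have hs2 : s ^ 2 = p ^ 2 + y ^ 2 := Real.sq_sqrt hpy.le
  have hs0 : 0 < s := Real.sqrt_pos.mpr hpy
  have hβ0 : 0 < β := hs0.trans hβ
  -- basics for a in the interval
  have key : ∀ a ∈ Set.Ico s β, 0 < a ∧ y ^ 2 ≤ a ^ 2 - p ^ 2 := by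
    rintro a ⟨ha1, _⟩
    have ha0 : 0 < a := hs0.trans_le ha1
    have h2 : s ^ 2 ≤ a ^ 2 := pow_le_pow_left₀ hs0.le ha1 2
    exact ⟨ha0, by nlinarith⟩
  have wd : ∀ a ∈ Set.Ico s β,
      0 ≤ 2 * a ^ 2 - a ^ 2 * y ^ 2 / (a ^ 2 - p ^ 2) ∧
      0 ≤ β ^ 2 - a ^ 2 + a ^ 2 * y ^ 2 / (a ^ 2 - p ^ 2) := by
    intro a ha
    obtain ⟨ha0, hya⟩ := key a ha
    have hd : 0 < a ^ 2 - p ^ 2 := lt_of_lt_of_le (by positivity) hya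
    have hg0 : 0 ≤ a ^ 2 * y ^ 2 / (a ^ 2 - p ^ 2) := by positivity
    have hgle : a ^ 2 * y ^ 2 / (a ^ 2 - p ^ 2) ≤ a ^ 2 := by
      rw [div_le_iff₀ hd]; nlinarith
    have hab : a ^ 2 ≤ β ^ 2 := by
      have := ha.2
      nlinarith
    constructor
    · nlinarith
    · nlinarith
  have hmono : MonotoneOn (kappaU p y β) (Set.Ico s β) := by
    intro a ha a' ha' hle
    obtain ⟨ha0, hya⟩ := key a ha
    obtain ⟨ha0', hya'⟩ := key a' ha'
    have hd : 0 < a ^ 2 - p ^ 2 := lt_of_lt_of_le (by positivity) hya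
    have hd' : 0 < a' ^ 2 - p ^ 2 := lt_of_lt_of_le (by positivity) hya'
    have haa : a ^ 2 ≤ a' ^ 2 := pow_le_pow_left₀ ha0.le hle 2
    have hgd : a' ^ 2 * y ^ 2 / (a' ^ 2 - p ^ 2) ≤ a ^ 2 * y ^ 2 / (a ^ 2 - p ^ 2) := by
      rw [div_le_div_iff₀ hd' hd]
      nlinarith [sq_nonneg (p * y)]
    -- numerator
    have hN : a + Real.sqrt (2 * a ^ 2 - a ^ 2 * y ^ 2 / (a ^ 2 - p ^ 2)) ≤
        a' + Real.sqrt (2 * a' ^ 2 - a' ^ 2 * y ^ 2 / (a' ^ 2 - p ^ 2)) := by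
      have : 2 * a ^ 2 - a ^ 2 * y ^ 2 / (a ^ 2 - p ^ 2) ≤
          2 * a' ^ 2 - a' ^ 2 * y ^ 2 / (a' ^ 2 - p ^ 2) := by linarith
      exact add_le_add hle (Real.sqrt_le_sqrt this)
    have hN0 : 0 ≤ a' + Real.sqrt (2 * a' ^ 2 - a' ^ 2 * y ^ 2 / (a' ^ 2 - p ^ 2)) := by
      have := Real.sqrt_nonneg (2 * a' ^ 2 - a' ^ 2 * y ^ 2 / (a' ^ 2 - p ^ 2))
      linarith
    -- denominator
    have hD : β + Real.sqrt (β ^ 2 - a' ^ 2 + a' ^ 2 * y ^ 2 / (a' ^ 2 - p ^ 2)) ≤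
        β + Real.sqrt (β ^ 2 - a ^ 2 + a ^ 2 * y ^ 2 / (a ^ 2 - p ^ 2)) := by
      have : β ^ 2 - a' ^ 2 + a' ^ 2 * y ^ 2 / (a' ^ 2 - p ^ 2) ≤
          β ^ 2 - a ^ 2 + a ^ 2 * y ^ 2 / (a ^ 2 - p ^ 2) := by linarith
      exact add_le_add le_rfl (Real.sqrt_le_sqrt this)
    have hD0 : 0 < β + Real.sqrt (β ^ 2 - a' ^ 2 + a' ^ 2 * y ^ 2 / (a' ^ 2 - p ^ 2)) := by
      have := Real.sqrt_nonneg (β ^ 2 - a' ^ 2 + a' ^ 2 * y ^ 2 / (a' ^ 2 - p ^ 2))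
      linarith
    exact div_le_div₀ hN0 hN hD0 hD
  have hsmem : s ∈ Set.Ico s β := ⟨le_rfl, hβ⟩
  have hval : kappaU p y β s = s / β := by
    have hyp : s ^ 2 - p ^ 2 = y ^ 2 := by rw [hs2]; ring
    have hg : s ^ 2 * y ^ 2 / (s ^ 2 - p ^ 2) = s ^ 2 := by
      rw [hyp, mul_div_assoc, div_self (by positivity), mul_one]
    unfold kappaU
    rw [hg]
    have h1 : 2 * s ^ 2 - s ^ 2 = s ^ 2 := by ring
    have h2 : β ^ 2 - s ^ 2 + s ^ 2 = β ^ 2 := by ring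
    rw [h1, h2, Real.sqrt_sq hs0.le, Real.sqrt_sq hβ0.le]
    rw [div_eq_div_iff (by linarith) hβ0.ne']
    ring
  refine ⟨wd, hmono, fun a ha => hmono hsmem ha ha.1, hval, (div_lt_one hβ0).mpr hβ⟩
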